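/- Fix α, β ∈ (0,1) and τ_Q > 0, and let c = αβ + (1−α)(1−β). For σ_Z ≥ 0 write σ_α = √(α² + (1−α)² + σ_Z²). Then the mean admitted type m(σ_Z) = (α/σ_α)·H(τ_Q σ_α / c) is strictly decreasing in σ_Z on [0,∞) and m(σ_Z) → α τ_Q / c as σ_Z → ∞; the mean admitted soft skill ((1−α)/σ_α)·H(τ_Q σ_α / c) is strictly decreasing in σ_Z with limit (1−α) τ_Q / c as σ_Z → ∞; and the admitted fraction 1 − Φ(τ_Q σ_α / c) is strictly decreasing in σ_Z. -/

import Mathlib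

open MeasureTheory Real Set Filter

/-- Standard normal pdf. -/
noncomputable def phi (x : ℝ) : ℝ := Real.exp (-x ^ 2 / 2) / Real.sqrt (2 * Real.pi)

/-- Standard normal cdf. -/
noncomputable def Phi (x : ℝ) : ℝ := ∫ y in Set.Iic x, phi y

/-- Standard normal hazard rate. -/
noncomputable def Haz (x : ℝ) : ℝ := phi x / (1 - Phi x)

/-! With t = τ_Q σ_α / c, which increases strictly from a positive value to ∞ with σ_Z, both means
equal (w τ_Q / c) · H(t)/t, and H(t)/t = 1 / (t R(t)) for the Mills ratio R = (1 - Φ)/φ.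
The Mills inequalities t φ(t)/(1 + t²) < 1 - Φ(t) < φ(t)/t (each proved by showing that the gap
is strictly decreasing with limit 0) make the derivative ((1 + t²)(1 - Φ) - t φ)/φ of t R(t)
positive and squeeze t R(t) between t²/(1 + t²) and 1, so H(t)/t decreases strictly to 1. -/

open scoped Topology
open ProbabilityTheory

lemma phi_eq_gaussianPDFReal : phi = gaussianPDFReal 0 1 := by
  ext x
  simp [phi, gaussianPDFReal, div_eq_inv_mul]

lemma phi_pos (x : ℝ) : 0 < phi x := by
  unfold phi; positivity

lemma integrable_phi : Integrable phi :=
  phi_eq_gaussianPDFReal ▸ integrable_gaussianPDFReal 0 1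

lemma integral_phi : ∫ x, phi x = 1 :=
  phi_eq_gaussianPDFReal ▸ integral_gaussianPDFReal_eq_one 0 one_ne_zero

lemma continuous_phi : Continuous phi := by
  unfold phi; fun_prop

lemma hasDerivAt_phi (x : ℝ) : HasDerivAt phi (-x * phi x) x := by
  have h : HasDerivAt (fun y : ℝ => -y ^ 2 / 2) (-x) x :=
    ((hasDerivAt_pow 2 x).neg.div_const 2).congr_deriv (by ring)
  exact (h.exp.div_const (√(2 * π))).congr_deriv (by simp only [phi]; ring)

lemma tendsto_phi_atTop : Tendsto phi atTop (𝓝 0) := by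
  have h : Tendsto (fun x : ℝ => x ^ 2 / 2) atTop atTop :=
    (tendsto_pow_atTop two_ne_zero).atTop_div_const two_pos
  have h0 := (tendsto_exp_neg_atTop_nhds_zero.comp h).div_const (√(2 * π))
  rw [zero_div] at h0
  exact h0.congr fun x => by simp [phi, neg_div]

lemma hasDerivAt_Phi (x : ℝ) : HasDerivAt Phi (phi x) x := by
  have hPhi : Phi = fun u => Phi 0 + ∫ y in (0 : ℝ)..u, phi y := by
    funext u
    rw [← intervalIntegral.integral_Iic_sub_Iic integrable_phi.integrableOn
      integrable_phi.integrableOn]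
    simp only [Phi]; ring
  rw [hPhi]
  exact (intervalIntegral.integral_hasDerivAt_right integrable_phi.intervalIntegrable
    (continuous_phi.stronglyMeasurableAtFilter _ _) continuous_phi.continuousAt).const_add _

lemma strictMono_Phi : StrictMono Phi :=
  strictMono_of_deriv_pos fun x => (hasDerivAt_Phi x).deriv ▸ phi_pos x

lemma tendsto_Phi_atTop : Tendsto Phi atTop (𝓝 1) := by
  have h := tendsto_setIntegral_of_monotone (μ := volume) (fun x : ℝ => measurableSet_Iic)
    (fun _ _ hab => Iic_subset_Iic.2 hab) integrable_phi.integrableOn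
  rwa [iUnion_Iic, Measure.restrict_univ, integral_phi] at h

lemma Phi_lt_one (x : ℝ) : Phi x < 1 :=
  (strictMono_Phi (lt_add_one x)).trans_le
    (strictMono_Phi.monotone.ge_of_tendsto tendsto_Phi_atTop (x + 1))

lemma tendsto_one_sub_Phi_atTop : Tendsto (fun x => 1 - Phi x) atTop (𝓝 0) := by
  simpa using tendsto_Phi_atTop.const_sub 1

lemma pos_of_strictAntiOn_of_tendsto_zero {f : ℝ → ℝ} {a x : ℝ} (hf : StrictAntiOn f (Ioi a))
    (hlim : Tendsto f atTop (𝓝 0)) (hx : a < x) : 0 < f x := by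
  have hx1 : a < x + 1 := by linarith
  have h0 : 0 ≤ f (x + 1) := by
    refine le_of_tendsto hlim ?_
    filter_upwards [eventually_ge_atTop (x + 1)] with y hy
    exact hf.antitoneOn hx1 (hx1.trans_le hy) hy
  exact h0.trans_lt (hf hx hx1 (lt_add_one x))

theorem mul_phi_div_lt_one_sub_Phi (x : ℝ) : x * phi x / (1 + x ^ 2) < 1 - Phi x := by
  set gap : ℝ → ℝ := fun y => 1 - Phi y - y * phi y / (1 + y ^ 2) with hgap
  have hderiv (y : ℝ) : HasDerivAt gap (-(2 * phi y) / (1 + y ^ 2) ^ 2) y := by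
    have hden : (1 + y ^ 2 : ℝ) ≠ 0 := by positivity
    refine (((hasDerivAt_Phi y).const_sub 1).sub (((hasDerivAt_id y).mul
      (hasDerivAt_phi y)).div ((hasDerivAt_pow 2 y).const_add 1) hden)).congr_deriv ?_
    simp only [id, Pi.mul_apply]
    field_simp
    ring
  have hanti : StrictAnti gap := strictAnti_of_deriv_neg fun y => by
    rw [(hderiv y).deriv]
    have := phi_pos y
    exact div_neg_of_neg_of_pos (by linarith) (by positivity)
  have hsmall : Tendsto (fun y => y * phi y / (1 + y ^ 2)) atTop (𝓝 0) := by
    refine tendsto_of_tendsto_of_tendsto_of_le_of_le' tendsto_const_nhds tendsto_phi_atTop ?_ ?_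
    all_goals filter_upwards [eventually_ge_atTop 0] with y hy
    · have := phi_pos y; positivity
    · rw [div_le_iff₀ (by positivity)]
      have := phi_pos y
      nlinarith [mul_nonneg this.le (sq_nonneg (y - 1)), mul_nonneg this.le hy]
  have hlim : Tendsto gap atTop (𝓝 0) := by
    simpa using tendsto_one_sub_Phi_atTop.sub hsmall
  have := pos_of_strictAntiOn_of_tendsto_zero (hanti.strictAntiOn _) hlim (sub_one_lt x)
  rw [hgap] at this
  linarith

theorem one_sub_Phi_lt_phi_div {x : ℝ} (hx : 0 < x) : 1 - Phi x < phi x / x := by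
  set gap : ℝ → ℝ := fun y => phi y / y - (1 - Phi y) with hgap
  have hderiv (y : ℝ) (hy : y ∈ Ioi 0) : HasDerivAt gap (-phi y / y ^ 2) y := by
    have hy0 : y ≠ 0 := ne_of_gt hy
    refine (((hasDerivAt_phi y).div (hasDerivAt_id y) hy0).sub
      ((hasDerivAt_Phi y).const_sub 1)).congr_deriv ?_
    simp only [id]
    field_simp
    ring
  have hanti : StrictAntiOn gap (Ioi 0) := by
    refine strictAntiOn_of_deriv_neg (convex_Ioi 0) (HasDerivAt.continuousOn hderiv) ?_
    rw [interior_Ioi]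
    intro y hy
    rw [(hderiv y hy).deriv]
    have := phi_pos y
    exact div_neg_of_neg_of_pos (by linarith) (pow_pos hy 2)
  have hlim : Tendsto gap atTop (𝓝 0) := by
    simpa using (tendsto_phi_atTop.div_atTop tendsto_id).sub tendsto_one_sub_Phi_atTop
  have := pos_of_strictAntiOn_of_tendsto_zero hanti hlim hx
  rw [hgap] at this
  linarith

noncomputable def millsRatio (x : ℝ) : ℝ := (1 - Phi x) / phi x

lemma millsRatio_pos (x : ℝ) : 0 < millsRatio x :=
  div_pos (sub_pos.2 (Phi_lt_one x)) (phi_pos x)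

lemma haz_div_eq_inv (t : ℝ) : Haz t / t = (t * millsRatio t)⁻¹ := by
  rw [Haz, millsRatio, mul_inv, inv_div, div_eq_inv_mul]

lemma strictMono_mul_millsRatio : StrictMono fun x => x * millsRatio x := by
  refine strictMono_of_deriv_pos fun x => ?_
  have hderiv : HasDerivAt (fun x => x * millsRatio x)
      (((1 + x ^ 2) * (1 - Phi x) - x * phi x) / phi x) x := by
    refine ((hasDerivAt_id x).mul (((hasDerivAt_Phi x).const_sub 1).div (hasDerivAt_phi x)
      (phi_pos x).ne')).congr_deriv ?_
    simp only [id, Pi.div_apply]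
    field_simp
    ring
  rw [hderiv.deriv]
  have hmills := mul_phi_div_lt_one_sub_Phi x
  rw [div_lt_iff₀ (by positivity)] at hmills
  exact div_pos (by linarith) (phi_pos x)

lemma tendsto_mul_millsRatio_atTop : Tendsto (fun x => x * millsRatio x) atTop (𝓝 1) := by
  have hlow : Tendsto (fun x : ℝ => 1 - (1 + x ^ 2)⁻¹) atTop (𝓝 1) := by
    simpa using (tendsto_inv_atTop_zero.comp (tendsto_atTop_add_const_left _ 1
      (tendsto_pow_atTop (α := ℝ) two_ne_zero))).const_sub 1
  refine tendsto_of_tendsto_of_tendsto_of_le_of_le' hlow tendsto_const_nhds ?_ ?_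
  all_goals filter_upwards [eventually_gt_atTop 0] with x hx
  · have hmills := mul_phi_div_lt_one_sub_Phi x
    rw [div_lt_iff₀ (by positivity)] at hmills
    rw [millsRatio, mul_div_assoc', le_div_iff₀ (phi_pos x), sub_mul, inv_mul_eq_div,
      sub_le_iff_le_add, ← sub_le_iff_le_add', le_div_iff₀ (by positivity)]
    nlinarith
  · have hmills := one_sub_Phi_lt_phi_div hx
    rw [lt_div_iff₀ hx] at hmills
    rw [millsRatio, mul_div_assoc', div_le_one (phi_pos x)]
    linarith

lemma strictAntiOn_haz_div : StrictAntiOn (fun t => Haz t / t) (Ioi 0) := by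
  intro a ha b hb hab
  simp only [haz_div_eq_inv]
  exact (inv_lt_inv₀ (mul_pos hb (millsRatio_pos b)) (mul_pos ha (millsRatio_pos a))).2
    (strictMono_mul_millsRatio hab)

lemma tendsto_haz_div_atTop : Tendsto (fun t => Haz t / t) atTop (𝓝 1) := by
  simpa [haz_div_eq_inv] using tendsto_mul_millsRatio_atTop.inv₀ one_ne_zero

lemma strictMonoOn_sqrt_add_sq {k : ℝ} (hk : 0 ≤ k) :
    StrictMonoOn (fun z => √(k + z ^ 2)) (Ici 0) := by
  intro a (ha : 0 ≤ a) b _ hab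
  exact Real.sqrt_lt_sqrt (by positivity) (by gcongr)

lemma tendsto_sqrt_add_sq_atTop (k : ℝ) : Tendsto (fun z => √(k + z ^ 2)) atTop atTop :=
  tendsto_sqrt_atTop.comp (tendsto_atTop_add_const_left _ k (tendsto_pow_atTop two_ne_zero))

theorem stmt4 (α β τQ : ℝ) (hα : α ∈ Set.Ioo (0 : ℝ) 1) (hβ : β ∈ Set.Ioo (0 : ℝ) 1)
    (hτ : 0 < τQ)
    (c : ℝ) (hc : c = α * β + (1 - α) * (1 - β))
    (σα : ℝ → ℝ) (hσα : ∀ σZ, σα σZ = Real.sqrt (α ^ 2 + (1 - α) ^ 2 + σZ ^ 2)) :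
    StrictAntiOn (fun σZ => α / σα σZ * Haz (τQ * σα σZ / c)) (Set.Ici 0) ∧
    Tendsto (fun σZ => α / σα σZ * Haz (τQ * σα σZ / c)) atTop (nhds (α * τQ / c)) ∧
    StrictAntiOn (fun σZ => (1 - α) / σα σZ * Haz (τQ * σα σZ / c)) (Set.Ici 0) ∧
    Tendsto (fun σZ => (1 - α) / σα σZ * Haz (τQ * σα σZ / c)) atTop
      (nhds ((1 - α) * τQ / c)) ∧
    StrictAntiOn (fun σZ => 1 - Phi (τQ * σα σZ / c)) (Set.Ici 0) := by
  obtain ⟨hα0, hα1⟩ := hα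
  have hc0 : 0 < c := by rw [hc]; nlinarith [hβ.1, hβ.2]
  have hσα_pos (σZ : ℝ) : 0 < σα σZ := by
    rw [hσα]; exact Real.sqrt_pos.2 (by nlinarith [sq_nonneg σZ])
  obtain rfl : σα = fun σZ => √(α ^ 2 + (1 - α) ^ 2 + σZ ^ 2) := funext hσα
  set t : ℝ → ℝ := fun σZ => τQ * √(α ^ 2 + (1 - α) ^ 2 + σZ ^ 2) / c with ht
  have ht_pos (σZ : ℝ) : 0 < t σZ := div_pos (mul_pos hτ (hσα_pos σZ)) hc0
  have ht_mono : StrictMonoOn t (Ici 0) := fun a ha b hb hab =>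
    div_lt_div_of_pos_right (mul_lt_mul_of_pos_left
      (strictMonoOn_sqrt_add_sq (by positivity) ha hb hab) hτ) hc0
  have ht_top : Tendsto t atTop atTop :=
    ((tendsto_sqrt_add_sq_atTop _).const_mul_atTop hτ).atTop_div_const hc0
  have hmean (w σZ : ℝ) : w / √(α ^ 2 + (1 - α) ^ 2 + σZ ^ 2) * Haz (t σZ) =
      w * τQ / c * (Haz (t σZ) / t σZ) := by
    have := (hσα_pos σZ).ne'
    rw [ht]; field_simp
  have hanti {w : ℝ} (hw : 0 < w) : StrictAntiOn
      (fun σZ => w / √(α ^ 2 + (1 - α) ^ 2 + σZ ^ 2) * Haz (t σZ)) (Ici 0) := by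
    intro a ha b hb hab
    simp only [hmean]
    exact mul_lt_mul_of_pos_left (strictAntiOn_haz_div.comp_strictMonoOn ht_mono
      (fun σZ _ => ht_pos σZ) ha hb hab) (by positivity)
  have hlim (w : ℝ) : Tendsto (fun σZ => w / √(α ^ 2 + (1 - α) ^ 2 + σZ ^ 2) * Haz (t σZ))
      atTop (𝓝 (w * τQ / c)) := by
    simpa [hmean] using (tendsto_haz_div_atTop.comp ht_top).const_mul (w * τQ / c)
  refine ⟨hanti hα0, hlim α, hanti (sub_pos.2 hα1), hlim (1 - α), ?_⟩
  intro a ha b hb hab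
  simpa using strictMono_Phi (ht_mono ha hb hab)
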